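/- Let Σ₁=(X₁,U₁,F₁) and Σ₂=(X₂,U₂,F₂) be systems, and let Q₁ ⊆ X₁ and Q₂ ⊆ X₂ be nonempty sets. Suppose R ⊆ X₁×X₂ is a feedback refinement relation from Σ₁ to Σ₂ and Q₁ = R⁻¹(Q₂). Then h_{1,inv} ≤ h_{2,inv}, where h_{i,inv} denotes the invariance feedback entropy of Σᵢ and Qᵢ. -/

import Mathlib

/-!
Fix an invariant cover `(𝒜₂, G₂)` of `Σ₂` and a `(τ, Q₂)`-spanning set `𝒮`. Since `R` is a
feedback refinement relation, whenever `(x₁, x₂) ∈ R`, every successor of `x₁` under `r u` is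
related to a successor of `x₂` under `u`. Hence the preimages `R⁻¹(A)` of the sets `A` occurring
in `𝒮` form an invariant cover of `Σ₁` once each preimage gets the input `r (G₂ A)` of one chosen
`A`, and `Σ₁` can follow the tree of `𝒮`, restarting at its roots after depth `τ`; this gives
spanning sets of every length `τ₁`.

Different nodes of the tree may have the same preimage, so the chosen node is one of least
potential `M ^ τ * N ^ s`, where `s` is its depth, `N = N(𝒮)` and `M` is the largest branching
product below it. Along a path of `Σ₁`, the `τ`-th power of each branching number times the
potential of the next node is at most `N` times the potential of the current one. Telescoping,
the paths of length `τ₁` have expansion number at most `N ^ ((τ₁ + 2τ) / τ)`, and letting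
`τ₁ → ∞` gives `h(𝒜₁, G₁) ≤ (1/τ) log₂ N(𝒮)`.
-/

open Set Filter Topology

/-- An invariant cover `(𝒜, G)` of the system with transition function `F` and the set `Q`:
`cov` is a finite cover of `Q` by subsets of `Q` and `G` assigns to each cover element an
input such that `F(A, G(A)) ⊆ Q`. -/
structure InvCover {X U : Type*} (F : X → U → Set X) (Q : Set X) where
  cov : Set (Set X)
  G : Set X → U
  finite : cov.Finite
  subset : ∀ A ∈ cov, A ⊆ Q
  covers : Q ⊆ ⋃₀ cov
  inv : ∀ A ∈ cov, ∀ x ∈ A, F x (G A) ⊆ Q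

variable {X U : Type*}

/-- The set `P(α|_{[0;t]})` associated with `𝒮 ⊆ 𝒜^{[0;τ)}`: for `t+1 < τ` it is the set of
possible successor cover elements of the initial piece `α|_{[0;t]}`, and for `t = τ-1`
(i.e. `¬ t + 1 < τ`) it is the set `P(α)` of initial cover elements. -/
def Pset {τ : ℕ} (𝒮 : Set (Fin τ → Set X)) (α : Fin τ → Set X) (t : ℕ) :
    Set (Set X) :=
  if ht : t + 1 < τ then
    {A | ∃ β ∈ 𝒮, (∀ t' : Fin τ, (t' : ℕ) ≤ t → β t' = α t') ∧ A = β ⟨t + 1, ht⟩}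
  else
    {A | ∃ β ∈ 𝒮, ∃ h0 : 0 < τ, A = β ⟨0, h0⟩}

/-- `𝒮` is `(τ,Q)`-spanning in the invariant cover `c`. -/
def IsSpanning (F : X → U → Set X) (Q : Set X) (c : InvCover F Q) (τ : ℕ)
    (𝒮 : Set (Fin τ → Set X)) : Prop :=
  (∀ α ∈ 𝒮, ∀ t, α t ∈ c.cov) ∧
  (∀ x ∈ Q, ∃ α ∈ 𝒮, ∃ h0 : 0 < τ, x ∈ α ⟨0, h0⟩) ∧
  (∀ α ∈ 𝒮, ∀ t : Fin τ, (t : ℕ) + 1 < τ →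
    ∀ x ∈ α t, F x (c.G (α t)) ⊆ ⋃ A ∈ Pset 𝒮 α (t : ℕ), A)

/-- The expansion number `N(𝒮)`. -/
noncomputable def expNum {τ : ℕ} (𝒮 : Set (Fin τ → Set X)) : ℕ :=
  sSup {n | ∃ α ∈ 𝒮, n = ∏ t ∈ Finset.range τ, (Pset 𝒮 α t).ncard}

/-- `r_inv(τ, Q)` : the smallest expansion number of a `(τ,Q)`-spanning set (`⊤` if no
spanning set exists). -/
noncomputable def rinv (F : X → U → Set X) (Q : Set X) (c : InvCover F Q)
    (τ : ℕ) : ℕ∞ :=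
  sInf {n | ∃ 𝒮 : Set (Fin τ → Set X), IsSpanning F Q c τ 𝒮 ∧ n = (expNum 𝒮 : ℕ∞)}

/-- Base-2 logarithm `ℕ∞ → EReal`, with `log₂ ∞ = ∞`. -/
noncomputable def elog2 (m : ℕ∞) : EReal :=
  WithTop.recTopCoe ⊤ (fun n : ℕ => ((Real.logb 2 n : ℝ) : EReal)) m

/-- The entropy `h(𝒜,G)` of an invariant cover, defined through the infimum
`inf_{τ ≥ 1} (1/τ) log₂ r_inv(τ,Q)` (which equals the limit). -/
noncomputable def coverEntropy (F : X → U → Set X) (Q : Set X)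
    (c : InvCover F Q) : EReal :=
  ⨅ (τ : ℕ) (_ : 0 < τ), (((τ : ℝ)⁻¹ : ℝ) : EReal) * elog2 (rinv F Q c τ)

/-- The invariance feedback entropy `h_inv` of the system and `Q`. -/
noncomputable def invEntropy (F : X → U → Set X) (Q : Set X) : EReal :=
  ⨅ c : InvCover F Q, coverEntropy F Q c

section SpanningTree

variable {τ : ℕ} (𝒮 : Set (Fin τ → Set X))

def initials : Set (Set X) :=
  {A | ∃ β ∈ 𝒮, ∃ h0 : 0 < τ, A = β ⟨0, h0⟩}

noncomputable def tailExpNum (α : Fin τ → Set X) (s : ℕ) : ℕ :=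
  sSup {n | ∃ β ∈ 𝒮, (∀ t : Fin τ, (t : ℕ) < s → β t = α t) ∧
    n = ∏ t ∈ Finset.Ico s τ, (Pset 𝒮 β t).ncard}

/-- The exponent `τ` makes restarting affordable: a root has potential at most
`expNum 𝒮 ^ τ`, which is the depth weight `expNum 𝒮 ^ (s + 1)` of a step from the last level
`s = τ - 1`. -/
noncomputable def potential (α : Fin τ → Set X) (s : ℕ) : ℕ :=
  tailExpNum 𝒮 α s ^ τ * expNum 𝒮 ^ s

variable {𝒮}

theorem Pset_of_not_lt (α : Fin τ → Set X) {t : ℕ} (ht : ¬ t + 1 < τ) :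
    Pset 𝒮 α t = initials 𝒮 :=
  dif_neg ht

theorem Pset_congr {α β : Fin τ → Set X} {t : ℕ}
    (h : ∀ t' : Fin τ, (t' : ℕ) ≤ t → β t' = α t') : Pset 𝒮 β t = Pset 𝒮 α t := by
  unfold Pset
  split_ifs
  · ext A
    constructor <;> rintro ⟨γ, hγ, hγt, rfl⟩ <;>
      exact ⟨γ, hγ, fun t' ht' => by rw [hγt t' ht', h t' ht'], rfl⟩
  · rfl

theorem initials_subset_biUnion_range : initials 𝒮 ⊆ ⋃ β ∈ 𝒮, range β := by
  rintro _ ⟨β, hβ, -, rfl⟩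
  exact mem_biUnion hβ (mem_range_self _)

theorem Pset_subset_biUnion_range (α : Fin τ → Set X) (t : ℕ) :
    Pset 𝒮 α t ⊆ ⋃ β ∈ 𝒮, range β := by
  unfold Pset
  split_ifs
  · rintro _ ⟨β, hβ, -, rfl⟩
    exact mem_biUnion hβ (mem_range_self _)
  · exact initials_subset_biUnion_range

theorem finite_biUnion_range (hfin : 𝒮.Finite) : (⋃ β ∈ 𝒮, range β).Finite :=
  hfin.biUnion fun β _ => finite_range β

theorem Pset_finite (hfin : 𝒮.Finite) (α : Fin τ → Set X) (t : ℕ) : (Pset 𝒮 α t).Finite :=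
  (finite_biUnion_range hfin).subset (Pset_subset_biUnion_range α t)

theorem Pset_nonempty (hτ : 0 < τ) {α : Fin τ → Set X} (hα : α ∈ 𝒮) (t : ℕ) :
    (Pset 𝒮 α t).Nonempty := by
  unfold Pset
  split_ifs
  · exact ⟨_, α, hα, fun _ _ => rfl, rfl⟩
  · exact ⟨_, α, hα, hτ, rfl⟩

theorem one_le_ncard_Pset (hfin : 𝒮.Finite) (hτ : 0 < τ) {α : Fin τ → Set X} (hα : α ∈ 𝒮)
    (t : ℕ) : 1 ≤ (Pset 𝒮 α t).ncard :=
  (ncard_pos (Pset_finite hfin α t)).2 (Pset_nonempty hτ hα t)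

theorem prod_ncard_Pset_le_expNum (hfin : 𝒮.Finite) {α : Fin τ → Set X} (hα : α ∈ 𝒮) :
    ∏ t ∈ Finset.range τ, (Pset 𝒮 α t).ncard ≤ expNum 𝒮 := by
  refine le_csSup ((hfin.image fun β => ∏ t ∈ Finset.range τ, (Pset 𝒮 β t).ncard).bddAbove.mono
    ?_) ⟨α, hα, rfl⟩
  rintro _ ⟨β, hβ, rfl⟩
  exact ⟨β, hβ, rfl⟩

theorem one_le_expNum (hfin : 𝒮.Finite) (hτ : 0 < τ) {α : Fin τ → Set X} (hα : α ∈ 𝒮) :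
    1 ≤ expNum 𝒮 :=
  (Finset.one_le_prod' fun t _ => one_le_ncard_Pset hfin hτ hα t).trans
    (prod_ncard_Pset_le_expNum hfin hα)

theorem ncard_Pset_le_expNum (hfin : 𝒮.Finite) (hτ : 0 < τ) {α : Fin τ → Set X} (hα : α ∈ 𝒮)
    {t : ℕ} (ht : t < τ) : (Pset 𝒮 α t).ncard ≤ expNum 𝒮 :=
  (Finset.single_le_prod' (fun t _ => one_le_ncard_Pset hfin hτ hα t)
    (Finset.mem_range.2 ht)).trans (prod_ncard_Pset_le_expNum hfin hα)

theorem expNum_pow_le {k n : ℕ} (hk : k ≠ 0)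
    (h : ∀ α ∈ 𝒮, (∏ t ∈ Finset.range τ, (Pset 𝒮 α t).ncard) ^ k ≤ n) :
    expNum 𝒮 ^ k ≤ n := by
  rcases 𝒮.eq_empty_or_nonempty with rfl | ⟨α, hα⟩
  · simp [expNum, zero_pow hk]
  · have hbdd : BddAbove {m | ∃ α ∈ 𝒮, m = ∏ t ∈ Finset.range τ, (Pset 𝒮 α t).ncard} := by
      refine ⟨n, ?_⟩
      rintro _ ⟨β, hβ, rfl⟩
      exact (Nat.le_self_pow hk _).trans (h β hβ)
    obtain ⟨β, hβ, hβN⟩ := Nat.sSup_mem (by exact ⟨_, α, hα, rfl⟩) hbdd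
    rw [expNum, hβN]
    exact h β hβ

theorem exists_tailExpNum_eq (hfin : 𝒮.Finite) {α : Fin τ → Set X} (hα : α ∈ 𝒮) (s : ℕ) :
    ∃ β ∈ 𝒮, (∀ t : Fin τ, (t : ℕ) < s → β t = α t) ∧
      tailExpNum 𝒮 α s = ∏ t ∈ Finset.Ico s τ, (Pset 𝒮 β t).ncard := by
  have hbdd : BddAbove {n | ∃ β ∈ 𝒮, (∀ t : Fin τ, (t : ℕ) < s → β t = α t) ∧
      n = ∏ t ∈ Finset.Ico s τ, (Pset 𝒮 β t).ncard} := by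
    refine (hfin.image fun β => ∏ t ∈ Finset.Ico s τ, (Pset 𝒮 β t).ncard).bddAbove.mono ?_
    rintro _ ⟨β, hβ, -, rfl⟩
    exact ⟨β, hβ, rfl⟩
  exact Nat.sSup_mem (by exact ⟨_, α, hα, fun _ _ => rfl, rfl⟩) hbdd

theorem prod_ncard_Pset_le_tailExpNum (hfin : 𝒮.Finite) {α β : Fin τ → Set X} (hβ : β ∈ 𝒮)
    {s : ℕ} (hβα : ∀ t : Fin τ, (t : ℕ) < s → β t = α t) :
    ∏ t ∈ Finset.Ico s τ, (Pset 𝒮 β t).ncard ≤ tailExpNum 𝒮 α s := by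
  refine le_csSup ((hfin.image fun γ => ∏ t ∈ Finset.Ico s τ, (Pset 𝒮 γ t).ncard).bddAbove.mono
    ?_) ⟨β, hβ, hβα, rfl⟩
  rintro _ ⟨γ, hγ, -, rfl⟩
  exact ⟨γ, hγ, rfl⟩

theorem tailExpNum_zero_le (α : Fin τ → Set X) (hfin : 𝒮.Finite) :
    tailExpNum 𝒮 α 0 ≤ expNum 𝒮 := by
  refine csSup_le' ?_
  rintro _ ⟨β, hβ, -, rfl⟩
  rw [← Finset.range_eq_Ico]
  exact prod_ncard_Pset_le_expNum hfin hβ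

theorem ncard_Pset_le_tailExpNum (hfin : 𝒮.Finite) (hτ : 0 < τ) {α : Fin τ → Set X}
    (hα : α ∈ 𝒮) {s : ℕ} (hs : s < τ) : (Pset 𝒮 α s).ncard ≤ tailExpNum 𝒮 α s :=
  (Finset.single_le_prod' (fun t _ => one_le_ncard_Pset hfin hτ hα t)
    (Finset.left_mem_Ico.2 hs)).trans (prod_ncard_Pset_le_tailExpNum hfin hα fun _ _ => rfl)

theorem ncard_Pset_mul_tailExpNum_succ_le (hfin : 𝒮.Finite) {α γ : Fin τ → Set X}
    (hγ : γ ∈ 𝒮) {s : ℕ} (hs : s < τ) (hγα : ∀ t : Fin τ, (t : ℕ) ≤ s → γ t = α t) :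
    (Pset 𝒮 α s).ncard * tailExpNum 𝒮 γ (s + 1) ≤ tailExpNum 𝒮 α s := by
  obtain ⟨δ, hδ, hδγ, hδeq⟩ := exists_tailExpNum_eq hfin hγ (s + 1)
  have hδα : ∀ t : Fin τ, (t : ℕ) ≤ s → δ t = α t := fun t ht =>
    (hδγ t (Nat.lt_succ_of_le ht)).trans (hγα t ht)
  rw [hδeq, ← Pset_congr hδα,
    ← Finset.prod_eq_prod_Ico_succ_bot hs fun t => (Pset 𝒮 δ t).ncard]
  exact prod_ncard_Pset_le_tailExpNum hfin hδ fun t ht => hδα t ht.le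

theorem one_le_potential (hfin : 𝒮.Finite) (hτ : 0 < τ) {α : Fin τ → Set X} (hα : α ∈ 𝒮)
    {s : ℕ} (hs : s < τ) : 1 ≤ potential 𝒮 α s :=
  one_le_mul_of_one_le_of_one_le
    (one_le_pow₀ ((one_le_ncard_Pset hfin hτ hα s).trans (ncard_Pset_le_tailExpNum hfin hτ hα hs)))
    (one_le_pow₀ (one_le_expNum hfin hτ hα))

theorem potential_zero_le (hfin : 𝒮.Finite) (α : Fin τ → Set X) :
    potential 𝒮 α 0 ≤ expNum 𝒮 ^ τ := by
  rw [potential, pow_zero, mul_one]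
  exact Nat.pow_le_pow_left (tailExpNum_zero_le α hfin) τ

theorem exists_ncard_Pset_pow_mul_potential_le (hfin : 𝒮.Finite) (hτ : 0 < τ)
    {α : Fin τ → Set X} (hα : α ∈ 𝒮) (s : Fin τ) {A : Set X} (hA : A ∈ Pset 𝒮 α s) :
    ∃ γ ∈ 𝒮, ∃ s' : Fin τ, γ s' = A ∧
      (Pset 𝒮 α s).ncard ^ τ * potential 𝒮 γ s' ≤ potential 𝒮 α s * expNum 𝒮 := by
  -- `m` is the tail factor of the child: `tailExpNum 𝒮 γ (s + 1)`, or `1` for a root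
  suffices ∃ γ ∈ 𝒮, ∃ s' : Fin τ, γ s' = A ∧ ∃ m, (Pset 𝒮 α s).ncard * m ≤ tailExpNum 𝒮 α s ∧
      potential 𝒮 γ s' ≤ m ^ τ * expNum 𝒮 ^ ((s : ℕ) + 1) by
    obtain ⟨γ, hγ, s', hγA, m, hm, hpot⟩ := this
    refine ⟨γ, hγ, s', hγA, ?_⟩
    calc (Pset 𝒮 α s).ncard ^ τ * potential 𝒮 γ s'
        ≤ (Pset 𝒮 α s).ncard ^ τ * (m ^ τ * expNum 𝒮 ^ ((s : ℕ) + 1)) :=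
          Nat.mul_le_mul_left _ hpot
      _ = ((Pset 𝒮 α s).ncard * m) ^ τ * expNum 𝒮 ^ (s : ℕ) * expNum 𝒮 := by ring
      _ ≤ tailExpNum 𝒮 α s ^ τ * expNum 𝒮 ^ (s : ℕ) * expNum 𝒮 := by gcongr
  by_cases hs : (s : ℕ) + 1 < τ
  · rw [Pset, dif_pos hs] at hA
    obtain ⟨γ, hγ, hγα, rfl⟩ := hA
    exact ⟨γ, hγ, _, rfl, _, ncard_Pset_mul_tailExpNum_succ_le hfin hγ s.isLt hγα, le_rfl⟩
  · rw [Pset_of_not_lt α hs] at hA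
    obtain ⟨γ, hγ, h0, rfl⟩ := hA
    refine ⟨γ, hγ, _, rfl, 1, by simpa using ncard_Pset_le_tailExpNum hfin hτ hα s.isLt, ?_⟩
    rw [one_pow, one_mul, show (s : ℕ) + 1 = τ by omega]
    exact potential_zero_le hfin γ

end SpanningTree

section Paths

variable (I : Set (Set X)) (next : Set X → Set (Set X))

def pathSet (τ : ℕ) : Set (Fin τ → Set X) :=
  {β | (∀ h : 0 < τ, β ⟨0, h⟩ ∈ I) ∧
    ∀ t (h : t + 1 < τ), β ⟨t + 1, h⟩ ∈ next (β ⟨t, Nat.lt_of_succ_lt h⟩)}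

variable {I next} {K : Set (Set X)} {τ : ℕ}

theorem apply_mem_of_mem_pathSet (hI : I ⊆ K) (hclosed : ∀ C ∈ K, next C ⊆ K)
    {β : Fin τ → Set X} (hβ : β ∈ pathSet I next τ) (t : Fin τ) : β t ∈ K := by
  obtain ⟨t, ht⟩ := t
  induction t with
  | zero => exact hI (hβ.1 ht)
  | succ t ih => exact hclosed _ (ih _) (hβ.2 t ht)

theorem exists_chain (hclosed : ∀ C ∈ K, next C ⊆ K) (hserial : ∀ C ∈ K, (next C).Nonempty)
    {D : Set X} (hD : D ∈ K) : ∃ f : ℕ → Set X, f 0 = D ∧ ∀ n, f (n + 1) ∈ next (f n) := by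
  choose! g hg using hserial
  have hmaps : MapsTo g K K := fun C hC => hclosed C hC (hg C hC)
  refine ⟨fun n => g^[n] D, rfl, fun n => ?_⟩
  show g^[n + 1] D ∈ next (g^[n] D)
  rw [Function.iterate_succ_apply']
  exact hg _ (hmaps.iterate n hD)

theorem exists_mem_pathSet_apply_zero (hI : I ⊆ K) (hclosed : ∀ C ∈ K, next C ⊆ K)
    (hserial : ∀ C ∈ K, (next C).Nonempty) (hτ : 0 < τ) {D : Set X} (hD : D ∈ I) :
    ∃ β ∈ pathSet I next τ, β ⟨0, hτ⟩ = D := by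
  obtain ⟨f, hf0, hf⟩ := exists_chain hclosed hserial (hI hD)
  exact ⟨fun u => f u, ⟨fun _ => show f 0 ∈ I from hf0 ▸ hD, fun t _ => hf t⟩, hf0⟩

theorem Pset_pathSet_of_lt (hI : I ⊆ K) (hclosed : ∀ C ∈ K, next C ⊆ K)
    (hserial : ∀ C ∈ K, (next C).Nonempty) {β : Fin τ → Set X} (hβ : β ∈ pathSet I next τ)
    {t : ℕ} (ht : t + 1 < τ) :
    Pset (pathSet I next τ) β t = next (β ⟨t, Nat.lt_of_succ_lt ht⟩) := by
  rw [Pset, dif_pos ht]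
  ext D
  constructor
  · rintro ⟨γ, hγ, hγβ, rfl⟩
    rw [← hγβ ⟨t, _⟩ le_rfl]
    exact hγ.2 t ht
  · intro hD
    obtain ⟨f, hf0, hf⟩ :=
      exists_chain hclosed hserial (hclosed _ (apply_mem_of_mem_pathSet hI hclosed hβ _) hD)
    refine ⟨fun u => if (u : ℕ) ≤ t then β u else f (u - (t + 1)),
      ⟨fun h => ?_, fun j hj => ?_⟩, fun u hu => if_pos hu, ?_⟩
    · simpa using hβ.1 h
    · dsimp only
      rcases lt_trichotomy j t with hjt | rfl | hjt
      · rw [if_pos (show j + 1 ≤ t by omega), if_pos hjt.le]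
        exact hβ.2 j hj
      · rw [if_neg (show ¬ j + 1 ≤ j by omega), if_pos le_rfl, Nat.sub_self, hf0]
        exact hD
      · rw [if_neg (show ¬ j + 1 ≤ t by omega), if_neg (show ¬ j ≤ t by omega),
          show j + 1 - (t + 1) = j - (t + 1) + 1 by omega]
        exact hf _
    · simp [hf0]

theorem Pset_pathSet_subset_of_not_lt (β : Fin τ → Set X) {t : ℕ} (ht : ¬ t + 1 < τ) :
    Pset (pathSet I next τ) β t ⊆ I := by
  rw [Pset_of_not_lt β ht]
  rintro _ ⟨γ, hγ, h0, rfl⟩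
  exact hγ.1 h0

end Paths

section Pullback

variable {X₁ X₂ : Type*} (R : Set (X₁ × X₂)) {τ : ℕ} (𝒮 : Set (Fin τ → Set X₂))

def IsNode (C : Set X₁) (p : (Fin τ → Set X₂) × Fin τ) : Prop :=
  p.1 ∈ 𝒮 ∧ SetRel.preimage R (p.1 p.2) = C

def pullbackSets : Set (Set X₁) :=
  {C | ∃ p, IsNode R 𝒮 C p}

variable {R 𝒮}

theorem image_biUnion_range_subset_pullbackSets :
    SetRel.preimage R '' (⋃ β ∈ 𝒮, range β) ⊆ pullbackSets R 𝒮 := by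
  rintro _ ⟨A, hA, rfl⟩
  simp only [mem_iUnion, mem_range] at hA
  obtain ⟨β, hβ, s, rfl⟩ := hA
  exact ⟨(β, s), hβ, rfl⟩

theorem pullbackSets_finite (hfin : 𝒮.Finite) : (pullbackSets R 𝒮).Finite := by
  refine ((finite_biUnion_range hfin).image (SetRel.preimage R)).subset ?_
  rintro _ ⟨p, hp, rfl⟩
  exact ⟨_, mem_biUnion hp (mem_range_self _), rfl⟩

theorem image_initials_subset_pullbackSets :
    SetRel.preimage R '' initials 𝒮 ⊆ pullbackSets R 𝒮 :=
  (image_mono initials_subset_biUnion_range).trans image_biUnion_range_subset_pullbackSets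

variable (R 𝒮) [NeZero τ]

open Classical in
noncomputable def bestNode (C : Set X₁) : (Fin τ → Set X₂) × Fin τ :=
  if h : C ∈ pullbackSets R 𝒮 then
    Function.argminOn (fun p => potential 𝒮 p.1 p.2) {p | IsNode R 𝒮 C p} h
  else default

noncomputable def bestSet (C : Set X₁) : Set X₂ :=
  (bestNode R 𝒮 C).1 (bestNode R 𝒮 C).2

noncomputable def bestPotential (C : Set X₁) : ℕ :=
  potential 𝒮 (bestNode R 𝒮 C).1 (bestNode R 𝒮 C).2

noncomputable def bestNext (C : Set X₁) : Set (Set X₁) :=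
  SetRel.preimage R '' Pset 𝒮 (bestNode R 𝒮 C).1 (bestNode R 𝒮 C).2

def pullbackPaths (τ₁ : ℕ) : Set (Fin τ₁ → Set X₁) :=
  pathSet (SetRel.preimage R '' initials 𝒮) (bestNext R 𝒮) τ₁

variable {R 𝒮}

theorem bestNode_isNode {C : Set X₁} (hC : C ∈ pullbackSets R 𝒮) :
    IsNode R 𝒮 C (bestNode R 𝒮 C) := by
  rw [bestNode, dif_pos hC]
  exact Function.argminOn_mem _ {p | IsNode R 𝒮 C p} hC

theorem bestPotential_le {C : Set X₁} {p : (Fin τ → Set X₂) × Fin τ} (hp : IsNode R 𝒮 C p) :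
    bestPotential R 𝒮 C ≤ potential 𝒮 p.1 p.2 := by
  rw [bestPotential, bestNode, dif_pos ⟨p, hp⟩]
  exact Function.argminOn_le (fun p => potential 𝒮 p.1 p.2) {p | IsNode R 𝒮 C p} hp

theorem preimage_bestSet {C : Set X₁} (hC : C ∈ pullbackSets R 𝒮) :
    SetRel.preimage R (bestSet R 𝒮 C) = C :=
  (bestNode_isNode hC).2

theorem bestNext_subset_pullbackSets (C : Set X₁) : bestNext R 𝒮 C ⊆ pullbackSets R 𝒮 :=
  (image_mono (Pset_subset_biUnion_range _ _)).trans image_biUnion_range_subset_pullbackSets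

theorem bestNext_nonempty {C : Set X₁} (hC : C ∈ pullbackSets R 𝒮) :
    (bestNext R 𝒮 C).Nonempty :=
  (Pset_nonempty (NeZero.pos τ) (bestNode_isNode hC).1 _).image _

theorem ncard_bestNext_pow_mul_bestPotential_le (hfin : 𝒮.Finite) {C D : Set X₁}
    (hC : C ∈ pullbackSets R 𝒮) (hD : D ∈ bestNext R 𝒮 C) :
    (bestNext R 𝒮 C).ncard ^ τ * bestPotential R 𝒮 D ≤ bestPotential R 𝒮 C * expNum 𝒮 := by
  obtain ⟨A, hA, rfl⟩ := hD
  obtain ⟨γ, hγ, s, rfl, hle⟩ :=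
    exists_ncard_Pset_pow_mul_potential_le hfin (NeZero.pos τ) (bestNode_isNode hC).1 _ hA
  calc (bestNext R 𝒮 C).ncard ^ τ * bestPotential R 𝒮 (SetRel.preimage R (γ s))
      ≤ (Pset 𝒮 (bestNode R 𝒮 C).1 (bestNode R 𝒮 C).2).ncard ^ τ * potential 𝒮 γ s :=
        Nat.mul_le_mul (Nat.pow_le_pow_left (ncard_image_le (Pset_finite hfin _ _)) τ)
          (bestPotential_le (p := (γ, s)) ⟨hγ, rfl⟩)
    _ ≤ bestPotential R 𝒮 C * expNum 𝒮 := hle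

theorem Pset_pullbackPaths_of_lt {τ₁ : ℕ} {β : Fin τ₁ → Set X₁} (hβ : β ∈ pullbackPaths R 𝒮 τ₁)
    {t : ℕ} (ht : t + 1 < τ₁) :
    Pset (pullbackPaths R 𝒮 τ₁) β t = bestNext R 𝒮 (β ⟨t, Nat.lt_of_succ_lt ht⟩) :=
  Pset_pathSet_of_lt image_initials_subset_pullbackSets (fun C _ => bestNext_subset_pullbackSets C)
    (fun _ => bestNext_nonempty) hβ ht

theorem apply_mem_pullbackSets {τ₁ : ℕ} {β : Fin τ₁ → Set X₁} (hβ : β ∈ pullbackPaths R 𝒮 τ₁)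
    (t : Fin τ₁) : β t ∈ pullbackSets R 𝒮 :=
  apply_mem_of_mem_pathSet image_initials_subset_pullbackSets
    (fun C _ => bestNext_subset_pullbackSets C) hβ t

theorem prod_ncard_Pset_pow_mul_bestPotential_le (hfin : 𝒮.Finite) {τ₁ : ℕ}
    {β : Fin τ₁ → Set X₁} (hβ : β ∈ pullbackPaths R 𝒮 τ₁) (j : ℕ) (hj : j < τ₁) :
    (∏ t ∈ Finset.range j, (Pset (pullbackPaths R 𝒮 τ₁) β t).ncard) ^ τ *
      bestPotential R 𝒮 (β ⟨j, hj⟩) ≤ expNum 𝒮 ^ (τ + j) := by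
  induction j with
  | zero =>
    obtain ⟨_, ⟨α, hα, h0, rfl⟩, hβ0⟩ := hβ.1 hj
    rw [Finset.prod_range_zero, one_pow, one_mul, add_zero]
    exact (bestPotential_le (p := (α, ⟨0, h0⟩)) ⟨hα, hβ0⟩).trans (potential_zero_le hfin α)
  | succ j ih =>
    set P := fun t => (Pset (pullbackPaths R 𝒮 τ₁) β t).ncard
    have hstep := ncard_bestNext_pow_mul_bestPotential_le hfin
      (apply_mem_pullbackSets hβ ⟨j, Nat.lt_of_succ_lt hj⟩) (hβ.2 j hj)
    rw [← Pset_pullbackPaths_of_lt hβ hj] at hstep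
    calc (∏ t ∈ Finset.range (j + 1), P t) ^ τ * bestPotential R 𝒮 (β ⟨j + 1, hj⟩)
        = (∏ t ∈ Finset.range j, P t) ^ τ * (P j ^ τ * bestPotential R 𝒮 (β ⟨j + 1, hj⟩)) := by
          rw [Finset.prod_range_succ, mul_pow, mul_assoc]
      _ ≤ (∏ t ∈ Finset.range j, P t) ^ τ *
            (bestPotential R 𝒮 (β ⟨j, Nat.lt_of_succ_lt hj⟩) * expNum 𝒮) :=
          Nat.mul_le_mul_left _ hstep
      _ ≤ expNum 𝒮 ^ (τ + j) * expNum 𝒮 := by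
          rw [← mul_assoc]
          exact Nat.mul_le_mul_right _ (ih _)
      _ = expNum 𝒮 ^ (τ + (j + 1)) := by rw [← pow_succ, add_assoc]

theorem prod_ncard_Pset_pullbackPaths_pow_le (hfin : 𝒮.Finite) {τ₁ : ℕ} (hτ₁ : 0 < τ₁)
    {β : Fin τ₁ → Set X₁} (hβ : β ∈ pullbackPaths R 𝒮 τ₁) :
    (∏ t ∈ Finset.range τ₁, (Pset (pullbackPaths R 𝒮 τ₁) β t).ncard) ^ τ ≤
      expNum 𝒮 ^ (τ₁ + 2 * τ) := by
  obtain ⟨m, rfl⟩ : ∃ m, τ₁ = m + 1 := ⟨τ₁ - 1, by omega⟩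
  set P := fun t => (Pset (pullbackPaths R 𝒮 (m + 1)) β t).ncard
  obtain ⟨_, ⟨α, hα, h0, rfl⟩, -⟩ := hβ.1 hτ₁
  have hN : 1 ≤ expNum 𝒮 := one_le_expNum hfin h0 hα
  have hlast : P m ≤ expNum 𝒮 := by
    have hfin' : (initials 𝒮).Finite :=
      (finite_biUnion_range hfin).subset initials_subset_biUnion_range
    calc P m ≤ (SetRel.preimage R '' initials 𝒮).ncard :=
          ncard_le_ncard (Pset_pathSet_subset_of_not_lt β (Nat.lt_irrefl (m + 1)))
            (hfin'.image _)
      _ ≤ (initials 𝒮).ncard := ncard_image_le hfin'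
      _ = (Pset 𝒮 α (τ - 1)).ncard := by rw [Pset_of_not_lt α (by omega)]
      _ ≤ expNum 𝒮 := ncard_Pset_le_expNum hfin h0 hα (by omega)
  have hinit : (∏ t ∈ Finset.range m, P t) ^ τ ≤ expNum 𝒮 ^ (τ + m) := by
    have hnode := bestNode_isNode (apply_mem_pullbackSets hβ ⟨m, m.lt_succ_self⟩)
    refine le_trans ?_ (prod_ncard_Pset_pow_mul_bestPotential_le hfin hβ m m.lt_succ_self)
    exact Nat.le_mul_of_pos_right _ (one_le_potential hfin (NeZero.pos τ) hnode.1 (Fin.isLt _))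
  calc (∏ t ∈ Finset.range (m + 1), P t) ^ τ
      = (∏ t ∈ Finset.range m, P t) ^ τ * P m ^ τ := by rw [Finset.prod_range_succ, mul_pow]
    _ ≤ expNum 𝒮 ^ (τ + m) * expNum 𝒮 ^ τ := Nat.mul_le_mul hinit (Nat.pow_le_pow_left hlast τ)
    _ ≤ expNum 𝒮 ^ (m + 1 + 2 * τ) := by
        rw [← pow_add]
        exact pow_le_pow_right₀ hN (by omega)

theorem expNum_pullbackPaths_pow_le (hfin : 𝒮.Finite) {τ₁ : ℕ} (hτ₁ : 0 < τ₁) :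
    expNum (pullbackPaths R 𝒮 τ₁) ^ τ ≤ expNum 𝒮 ^ (τ₁ + 2 * τ) :=
  expNum_pow_le (NeZero.ne τ) fun _ hβ => prod_ncard_Pset_pullbackPaths_pow_le hfin hτ₁ hβ

end Pullback

section Spanning

variable {F : X → U → Set X} {Q : Set X} {c : InvCover F Q} {τ : ℕ} {𝒮 : Set (Fin τ → Set X)}

theorem IsSpanning.finite (h : IsSpanning F Q c τ 𝒮) : 𝒮.Finite :=
  (Set.Finite.pi fun _ : Fin τ => c.finite).subset fun α hα =>
    mem_univ_pi.2 fun t => h.1 α hα t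

theorem IsSpanning.subset_biUnion_Pset (h : IsSpanning F Q c τ 𝒮) {α : Fin τ → Set X}
    (hα : α ∈ 𝒮) (s : Fin τ) {x : X} (hx : x ∈ α s) :
    F x (c.G (α s)) ⊆ ⋃ A ∈ Pset 𝒮 α s, A := by
  by_cases hs : (s : ℕ) + 1 < τ
  · exact h.2.2 α hα s hs x hx
  · rw [Pset_of_not_lt α hs]
    intro y hy
    obtain ⟨β, hβ, h0, hyβ⟩ := h.2.1 y (c.inv _ (h.1 α hα s) x hx hy)
    exact mem_biUnion ⟨β, hβ, h0, rfl⟩ hyβ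

end Spanning

section Entropy

theorem logb_two_natCast_mono : Monotone fun n : ℕ => Real.logb 2 n := by
  intro m n hmn
  rcases m.eq_zero_or_pos with rfl | hm
  · show Real.logb 2 ((0 : ℕ) : ℝ) ≤ Real.logb 2 n
    rw [Nat.cast_zero, Real.logb_zero]
    exact div_nonneg (Real.log_natCast_nonneg n) (Real.log_nonneg one_le_two)
  · exact Real.logb_le_logb_of_le one_lt_two (by exact_mod_cast hm) (by exact_mod_cast hmn)

theorem elog2_mono : Monotone elog2 := by
  intro m n hmn
  induction n using ENat.recTopCoe with
  | top => exact le_top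
  | coe n =>
    induction m using ENat.recTopCoe with
    | top => exact absurd hmn (by simp)
    | coe m => exact EReal.coe_le_coe_iff.2 (logb_two_natCast_mono (ENat.natCast_le_natCast.1 hmn))

theorem coverEntropy_le_of_forall_pow_le {F : X → U → Set X} {Q : Set X} (c : InvCover F Q)
    {a b N : ℕ} (ha : 0 < a)
    (h : ∀ τ, 0 < τ → ∃ n : ℕ, rinv F Q c τ ≤ n ∧ n ^ a ≤ N ^ (τ + b)) :
    coverEntropy F Q c ≤ (((a : ℝ)⁻¹ : ℝ) : EReal) * elog2 N := by
  set L := Real.logb 2 N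
  have hbound : ∀ τ : ℕ, 0 < τ →
      coverEntropy F Q c ≤ (((a : ℝ)⁻¹ * L + b * L / a / τ : ℝ) : EReal) := by
    intro τ hτ
    obtain ⟨n, hrinv, hn⟩ := h τ hτ
    have hlog : (a : ℝ) * Real.logb 2 n ≤ (τ + b) * L := by
      have := logb_two_natCast_mono hn
      simp only [Nat.cast_pow, Real.logb_pow] at this
      exact_mod_cast this
    have hτ' : (0 : ℝ) < τ := by exact_mod_cast hτ
    have ha' : (0 : ℝ) < a := by exact_mod_cast ha
    calc coverEntropy F Q c ≤ (((τ : ℝ)⁻¹ : ℝ) : EReal) * elog2 (rinv F Q c τ) :=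
          iInf₂_le τ hτ
      _ ≤ (((τ : ℝ)⁻¹ : ℝ) : EReal) * elog2 n :=
          mul_le_mul_of_nonneg_left (elog2_mono hrinv) (by exact_mod_cast (inv_pos.2 hτ').le)
      _ = (((τ : ℝ)⁻¹ * Real.logb 2 n : ℝ) : EReal) := (EReal.coe_mul _ _).symm
      _ ≤ (((a : ℝ)⁻¹ * L + b * L / a / τ : ℝ) : EReal) := by
          refine EReal.coe_le_coe_iff.2 ?_
          rw [inv_mul_le_iff₀ hτ', ← mul_le_mul_iff_of_pos_left ha']
          field_simp
          linarith
  have hlim : Tendsto (fun τ : ℕ => (((a : ℝ)⁻¹ * L + b * L / a / τ : ℝ) : EReal)) atTop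
      (𝓝 (((a : ℝ)⁻¹ * L : ℝ) : EReal)) := by
    refine EReal.tendsto_coe.2 ?_
    simpa using (tendsto_const_div_atTop_nhds_zero_nat (b * L / a : ℝ)).const_add ((a : ℝ)⁻¹ * L)
  rw [show elog2 N = (L : EReal) from rfl, ← EReal.coe_mul]
  exact ge_of_tendsto hlim (eventually_atTop.2 ⟨1, hbound⟩)

end Entropy

section FeedbackRefinement

variable {X₁ U₁ X₂ U₂ : Type*} {F₁ : X₁ → U₁ → Set X₁} {F₂ : X₂ → U₂ → Set X₂}
  {Q₁ : Set X₁} {Q₂ : Set X₂} (R : Set (X₁ × X₂)) {τ : ℕ} [NeZero τ] (𝒮 : Set (Fin τ → Set X₂))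
  (c₂ : InvCover F₂ Q₂) (r : U₂ → U₁) (hspan : IsSpanning F₂ Q₂ c₂ τ 𝒮)
  (hlift : ∀ x₁ x₂ u y₁, (x₁, x₂) ∈ R → y₁ ∈ F₁ x₁ (r u) → ∃ y₂ ∈ F₂ x₂ u, (y₁, y₂) ∈ R)
  (hQ : Q₁ = SetRel.preimage R Q₂)

noncomputable def pullbackCover : InvCover F₁ Q₁ where
  cov := pullbackSets R 𝒮
  G C := r (c₂.G (bestSet R 𝒮 C))
  finite := pullbackSets_finite hspan.finite
  subset := by
    rintro _ ⟨p, hp, rfl⟩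
    rw [hQ]
    exact SetRel.preimage_mono (c₂.subset _ (hspan.1 _ hp _))
  covers x hx := by
    rw [hQ] at hx
    obtain ⟨x₂, hx₂, hR⟩ := hx
    obtain ⟨α, hα, h0, hx₂0⟩ := hspan.2.1 x₂ hx₂
    exact ⟨_, ⟨(α, ⟨0, h0⟩), hα, rfl⟩, x₂, hx₂0, hR⟩
  inv C hC x hx y₁ hy₁ := by
    rw [← preimage_bestSet hC] at hx
    obtain ⟨x₂, hx₂, hR⟩ := hx
    obtain ⟨y₂, hy₂, hy⟩ := hlift x x₂ _ y₁ hR hy₁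
    rw [hQ]
    exact ⟨y₂, c₂.inv _ (hspan.1 _ (bestNode_isNode hC).1 _) x₂ hx₂ hy₂, hy⟩

variable {R 𝒮 c₂ r}

theorem isSpanning_pullbackCover {τ₁ : ℕ} (hτ₁ : 0 < τ₁) :
    IsSpanning F₁ Q₁ (pullbackCover R 𝒮 c₂ r hspan hlift hQ) τ₁ (pullbackPaths R 𝒮 τ₁) := by
  refine ⟨fun β hβ t => apply_mem_pullbackSets hβ t, fun x hx => ?_,
    fun β hβ t ht x hx y₁ hy₁ => ?_⟩
  · rw [hQ] at hx
    obtain ⟨x₂, hx₂, hR⟩ := hx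
    obtain ⟨α, hα, h0, hx₂0⟩ := hspan.2.1 x₂ hx₂
    obtain ⟨β, hβ, hβ0⟩ := exists_mem_pathSet_apply_zero image_initials_subset_pullbackSets
      (fun C _ => bestNext_subset_pullbackSets C) (fun _ => bestNext_nonempty) hτ₁
      ⟨_, ⟨α, hα, h0, rfl⟩, rfl⟩
    exact ⟨β, hβ, hτ₁, hβ0 ▸ ⟨x₂, hx₂0, hR⟩⟩
  · have hC := apply_mem_pullbackSets hβ t
    rw [← preimage_bestSet hC] at hx
    obtain ⟨x₂, hx₂, hR⟩ := hx
    obtain ⟨y₂, hy₂, hy⟩ := hlift x x₂ _ y₁ hR hy₁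
    obtain ⟨A, hA, hy₂A⟩ :=
      mem_iUnion₂.1 (hspan.subset_biUnion_Pset (bestNode_isNode hC).1 _ hx₂ hy₂)
    rw [Pset_pullbackPaths_of_lt hβ ht]
    exact mem_biUnion ⟨A, hA, rfl⟩ ⟨y₂, hy₂A, hy⟩

theorem coverEntropy_pullbackCover_le :
    coverEntropy F₁ Q₁ (pullbackCover R 𝒮 c₂ r hspan hlift hQ) ≤
      (((τ : ℝ)⁻¹ : ℝ) : EReal) * elog2 (expNum 𝒮) :=
  coverEntropy_le_of_forall_pow_le _ (NeZero.pos τ) fun _ hτ₁ =>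
    ⟨_, sInf_le ⟨_, isSpanning_pullbackCover hspan hlift hQ hτ₁, rfl⟩,
      expNum_pullbackPaths_pow_le hspan.finite hτ₁⟩

end FeedbackRefinement

theorem invEntropy_le_of_feedback_refinement_general
    {X₁ U₁ X₂ U₂ : Type*}
    (F₁ : X₁ → U₁ → Set X₁)
    (F₂ : X₂ → U₂ → Set X₂)
    (Q₁ : Set X₁) (Q₂ : Set X₂)
    (R : Set (X₁ × X₂))
    (hRstrict : ∀ x₁ : X₁, ∃ x₂ : X₂, (x₁, x₂) ∈ R)
    (hfrr : ∃ r : U₂ → U₁, ∀ x₁ x₂, (x₁, x₂) ∈ R → ∀ u : U₂,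
      {y₂ : X₂ | ∃ y₁ ∈ F₁ x₁ (r u), (y₁, y₂) ∈ R} ⊆ F₂ x₂ u)
    (hQ : Q₁ = {x₁ : X₁ | ∃ x₂ ∈ Q₂, (x₁, x₂) ∈ R}) :
    invEntropy F₁ Q₁ ≤ invEntropy F₂ Q₂ := by
  obtain ⟨r, hr⟩ := hfrr
  have hlift : ∀ x₁ x₂ u y₁, (x₁, x₂) ∈ R → y₁ ∈ F₁ x₁ (r u) → ∃ y₂ ∈ F₂ x₂ u, (y₁, y₂) ∈ R :=
    fun x₁ x₂ u y₁ hx hy =>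
      let ⟨y₂, hy₂⟩ := hRstrict y₁
      ⟨y₂, hr x₁ x₂ hx u ⟨y₁, hy, hy₂⟩, hy₂⟩
  refine le_iInf fun c₂ => le_iInf₂ fun τ hτ => ?_
  have : NeZero τ := ⟨hτ.ne'⟩
  rcases {n | ∃ 𝒮, IsSpanning F₂ Q₂ c₂ τ 𝒮 ∧ n = (expNum 𝒮 : ℕ∞)}.eq_empty_or_nonempty
    with hempty | hne
  · have hτ' : (0 : EReal) < (((τ : ℝ)⁻¹ : ℝ) : EReal) := by
      exact_mod_cast inv_pos.2 (Nat.cast_pos.2 hτ)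
    rw [rinv, hempty, sInf_empty, show elog2 ⊤ = ⊤ from rfl, EReal.mul_top_of_pos hτ']
    exact le_top
  · obtain ⟨𝒮, hspan, hrinv⟩ := csInf_mem hne
    rw [rinv, hrinv]
    exact (iInf_le _ _).trans (coverEntropy_pullbackCover_le hspan hlift hQ)

/-- If `R` is a feedback refinement relation from `Σ₁` to `Σ₂` and
`Q₁ = R⁻¹(Q₂)`, then `h_{1,inv} ≤ h_{2,inv}`. -/
theorem invEntropy_le_of_feedback_refinement
    {X₁ U₁ X₂ U₂ : Type*} [Nonempty X₁] [Nonempty U₁] [Nonempty X₂] [Nonempty U₂]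
    (F₁ : X₁ → U₁ → Set X₁) (hF₁ : ∀ x u, (F₁ x u).Nonempty)
    (F₂ : X₂ → U₂ → Set X₂) (hF₂ : ∀ x u, (F₂ x u).Nonempty)
    (Q₁ : Set X₁) (hQ₁ : Q₁.Nonempty) (Q₂ : Set X₂) (hQ₂ : Q₂.Nonempty)
    (R : Set (X₁ × X₂))
    (hRstrict : ∀ x₁ : X₁, ∃ x₂ : X₂, (x₁, x₂) ∈ R)
    (hfrr : ∃ r : U₂ → U₁, ∀ x₁ x₂, (x₁, x₂) ∈ R → ∀ u : U₂,
      {y₂ : X₂ | ∃ y₁ ∈ F₁ x₁ (r u), (y₁, y₂) ∈ R} ⊆ F₂ x₂ u)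
    (hQ : Q₁ = {x₁ : X₁ | ∃ x₂ ∈ Q₂, (x₁, x₂) ∈ R}) :
    invEntropy F₁ Q₁ ≤ invEntropy F₂ Q₂ :=
  invEntropy_le_of_feedback_refinement_general F₁ F₂ Q₁ Q₂ R hRstrict hfrr hQ
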